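/- arXiv:1609.00804 — 2 statements merged into one kernel-verified Lean document; each statement's English description precedes it below -/
import Mathlib

section
/- Let J be a real square matrix (not necessarily symmetric) of block form [[A, C],[D, E]] with A, E square, and let H be the symmetric matrix [[aI, Rᵀ],[R, dI]] where R = (Cᵀ + D)/2 (as appropriate), a ≤ λ_min((A+Aᵀ)/2), d ≤ λ_min((E+Eᵀ)/2). If H is positive definite then J is positive definite in the sense that tᵀ J t > 0 for all nonzero t. -/
/-!
Write `t = (x, y)`. The quadratic forms of `J` and `H` have the same cross term
`y ⬝ᵥ (Cᵀ + D) *ᵥ x`, so `tᵀJt - tᵀHt = (xᵀAx - a‖x‖²) + (yᵀEy - d‖y‖²)`. Each bracket is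
nonnegative: `xᵀAx` is the quadratic form of the symmetric part of `A`, whose eigenvalues
are at least `a` (similarly for `E` and `d`).
-/

open Matrix

namespace Matrix

variable {l m : Type*} [Fintype l] [Fintype m]

theorem dotProduct_fromBlocks_mulVec_sumElim {α : Type*} [CommSemiring α]
    (A : Matrix l l α) (B : Matrix l m α) (C : Matrix m l α) (D : Matrix m m α)
    (x : l → α) (y : m → α) :
    Sum.elim x y ⬝ᵥ (fromBlocks A B C D *ᵥ Sum.elim x y) =
      x ⬝ᵥ (A *ᵥ x) + y ⬝ᵥ ((Bᵀ + C) *ᵥ x) + y ⬝ᵥ (D *ᵥ y) := by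
  rw [fromBlocks_mulVec, sumElim_dotProduct_sumElim, Sum.elim_comp_inl, Sum.elim_comp_inr,
    dotProduct_add, dotProduct_add, add_mulVec, dotProduct_add, dotProduct_transpose_mulVec]
  ring

theorem dotProduct_half_smul_add_transpose_mulVec {K : Type*} [Field K] [NeZero (2 : K)]
    (M : Matrix l l K) (x : l → K) :
    x ⬝ᵥ ((((1 : K) / 2) • (M + Mᵀ)) *ᵥ x) = x ⬝ᵥ (M *ᵥ x) := by
  rw [smul_mulVec, dotProduct_smul, add_mulVec, dotProduct_add, dotProduct_transpose_mulVec,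
    smul_eq_mul, ← two_mul, ← mul_assoc, one_div_mul_cancel two_ne_zero, one_mul]

theorem IsHermitian.mul_dotProduct_self_le [DecidableEq l] {S : Matrix l l ℝ}
    (hS : S.IsHermitian) {a : ℝ} (ha : ∀ i, a ≤ hS.eigenvalues i) (x : l → ℝ) :
    a * (x ⬝ᵥ x) ≤ x ⬝ᵥ (S *ᵥ x) := by
  have hpsd : (S - a • 1).PosSemidef := by
    rw [posSemidef_iff_isHermitian_and_spectrum_nonneg]
    refine ⟨hS.sub (isHermitian_one.smul (IsSelfAdjoint.all a)), ?_⟩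
    rw [← Algebra.algebraMap_eq_smul_one, ← spectrum.sub_singleton_eq,
      hS.spectrum_eq_image_range]
    rintro _ ⟨_, ⟨_, ⟨i, rfl⟩, rfl⟩, _, rfl, rfl⟩
    simpa using ha i
  have hquad := hpsd.dotProduct_mulVec_nonneg x
  rwa [star_trivial, sub_mulVec, dotProduct_sub, smul_mulVec, one_mulVec, dotProduct_smul,
    smul_eq_mul, sub_nonneg] at hquad

end Matrix

/-- Let `J = [[A, C],[D, E]]` and `H = [[aI, Rᵀ],[R, dI]]` with
`R = (Cᵀ + D)/2`, `a ≤ λ_min((A+Aᵀ)/2)` and `d ≤ λ_min((E+Eᵀ)/2)`.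
If `H` is positive definite then `tᵀ J t > 0` for all nonzero `t`. -/
theorem posDef_of_bounding_matrix {m n : ℕ} [NeZero m] [NeZero n]
    (A : Matrix (Fin m) (Fin m) ℝ) (C : Matrix (Fin m) (Fin n) ℝ)
    (D : Matrix (Fin n) (Fin m) ℝ) (E : Matrix (Fin n) (Fin n) ℝ)
    (a d : ℝ)
    (hA : (((1 : ℝ) / 2) • (A + Aᵀ)).IsHermitian)
    (hE : (((1 : ℝ) / 2) • (E + Eᵀ)).IsHermitian)
    (ha : a ≤ Finset.univ.inf' Finset.univ_nonempty hA.eigenvalues)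
    (hd : d ≤ Finset.univ.inf' Finset.univ_nonempty hE.eigenvalues)
    (hH : (Matrix.fromBlocks (a • 1) (((1 : ℝ) / 2) • (Cᵀ + D))ᵀ
            (((1 : ℝ) / 2) • (Cᵀ + D)) (d • 1)).PosDef) :
    ∀ t : Fin m ⊕ Fin n → ℝ, t ≠ 0 →
      0 < t ⬝ᵥ (Matrix.fromBlocks A C D E *ᵥ t) := by
  intro t ht
  obtain ⟨x, y, rfl⟩ : ∃ x y, t = Sum.elim x y := ⟨_, _, (Sum.elim_comp_inl_inr t).symm⟩
  have hAx : a * (x ⬝ᵥ x) ≤ x ⬝ᵥ (A *ᵥ x) := by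
    rw [← dotProduct_half_smul_add_transpose_mulVec]
    exact hA.mul_dotProduct_self_le (fun i ↦ ha.trans (Finset.inf'_le _ (Finset.mem_univ i))) x
  have hEy : d * (y ⬝ᵥ y) ≤ y ⬝ᵥ (E *ᵥ y) := by
    rw [← dotProduct_half_smul_add_transpose_mulVec]
    exact hE.mul_dotProduct_self_le (fun i ↦ hd.trans (Finset.inf'_le _ (Finset.mem_univ i))) y
  have hcross : ((((1 : ℝ) / 2) • (Cᵀ + D))ᵀ)ᵀ + ((1 : ℝ) / 2) • (Cᵀ + D) = Cᵀ + D := by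
    rw [transpose_transpose, ← add_smul, add_halves, one_smul]
  have hHxy := hH.dotProduct_mulVec_pos ht
  rw [star_trivial, dotProduct_fromBlocks_mulVec_sumElim, hcross] at hHxy
  simp only [smul_mulVec, one_mulVec, dotProduct_smul, smul_eq_mul] at hHxy
  rw [dotProduct_fromBlocks_mulVec_sumElim]
  linarith
end

section
/- The function h(μ, σ) = (σ/√(2π)) exp(−μ²/(2σ²)) + (μ/2)(1 − erf(−μ/(√2 σ))), for μ ∈ ℝ and σ > 0, viewed as a function of (μ, σ²), satisfies ∂h/∂(σ²) = (1/(2√(2π) σ)) exp(−μ²/(2σ²)). -/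
open Real

noncomputable def erf (x : ℝ) : ℝ :=
  (2 / Real.sqrt π) * ∫ t in (0 : ℝ)..x, Real.exp (-t ^ 2)

noncomputable def h (μ σ : ℝ) : ℝ :=
  σ / Real.sqrt (2 * π) * Real.exp (-(μ ^ 2) / (2 * σ ^ 2)) +
    μ / 2 * (1 - erf (-(μ / (Real.sqrt 2 * σ))))

/-!
With `φ` and `Φ` the standard normal density and distribution function,
`h μ σ = σ φ(μ/σ) + μ Φ(μ/σ)`. Differentiating in `σ`, the terms coming from `φ' (m) = -m φ(m)`
and `Φ' = φ` cancel exactly because `σ · (μ/σ) = μ`, leaving `∂h/∂σ = φ(μ/σ)`.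
The chain rule through `σ = √v` contributes the factor `1/(2σ)`.
-/

noncomputable def stdNormalPDF (x : ℝ) : ℝ :=
  Real.exp (-x ^ 2 / 2) / Real.sqrt (2 * π)

noncomputable def stdNormalCDF (x : ℝ) : ℝ :=
  (1 - erf (-(x / Real.sqrt 2))) / 2

lemma hasDerivAt_erf (x : ℝ) : HasDerivAt erf (2 / Real.sqrt π * Real.exp (-x ^ 2)) x :=
  ((continuous_exp.comp (continuous_pow 2).neg).integral_hasStrictDerivAt 0 x).hasDerivAt
    |>.const_mul _

lemma hasDerivAt_stdNormalPDF (x : ℝ) :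
    HasDerivAt stdNormalPDF (-x * stdNormalPDF x) x := by
  refine (((hasDerivAt_pow 2 x).neg.div_const 2).exp.div_const (Real.sqrt (2 * π))).congr_deriv ?_
  simp only [stdNormalPDF, Pi.neg_apply]
  ring

lemma hasDerivAt_stdNormalCDF (x : ℝ) :
    HasDerivAt stdNormalCDF (stdNormalPDF x) x := by
  refine ((((hasDerivAt_erf _).comp x ((hasDerivAt_id x).div_const (Real.sqrt 2)).neg).const_sub
    1).div_const 2).congr_deriv ?_
  simp only [stdNormalPDF, Pi.neg_apply, id_eq, Real.sqrt_mul zero_le_two, neg_sq, div_pow,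
    Real.sq_sqrt zero_le_two]
  field_simp

lemma hasDerivAt_mul_comp_div_add_mul_comp_div {φ Φ : ℝ → ℝ} (μ : ℝ) {σ : ℝ} (hσ : σ ≠ 0)
    (hφ : HasDerivAt φ (-(μ / σ) * φ (μ / σ)) (μ / σ))
    (hΦ : HasDerivAt Φ (φ (μ / σ)) (μ / σ)) :
    HasDerivAt (fun s => s * φ (μ / s) + μ * Φ (μ / s)) (φ (μ / σ)) σ := by
  have hdiv : HasDerivAt (fun s => μ / s) (-(μ / σ ^ 2)) σ := by
    simpa [div_eq_mul_inv] using (hasDerivAt_inv hσ).const_mul μ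
  refine (((hasDerivAt_id σ).mul (hφ.comp σ hdiv)).add
    ((hΦ.comp σ hdiv).const_mul μ)).congr_deriv ?_
  simp only [Function.comp_apply, id_eq, one_mul]
  field_simp
  ring

lemma h_eq_stdNormal (μ σ : ℝ) :
    h μ σ = σ * stdNormalPDF (μ / σ) + μ * stdNormalCDF (μ / σ) := by
  unfold h stdNormalPDF stdNormalCDF
  rw [div_pow, div_div, mul_comm (Real.sqrt 2) σ, ← div_div]
  ring_nf

lemma hasDerivAt_h_right (μ : ℝ) {σ : ℝ} (hσ : σ ≠ 0) :
    HasDerivAt (h μ) (stdNormalPDF (μ / σ)) σ := by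
  rw [funext (h_eq_stdNormal μ)]
  exact hasDerivAt_mul_comp_div_add_mul_comp_div μ hσ (hasDerivAt_stdNormalPDF _)
    (hasDerivAt_stdNormalCDF _)

/-- Viewing `h` as a function of the variance `v = σ²`, its derivative with
respect to the variance is `(1/(2√(2π) σ)) exp(-μ²/(2σ²))`. -/
theorem hasDerivAt_h_variance (μ σ : ℝ) (hσ : 0 < σ) :
    HasDerivAt (fun v : ℝ => h μ (Real.sqrt v))
      (1 / (2 * Real.sqrt (2 * π) * σ) * Real.exp (-(μ ^ 2) / (2 * σ ^ 2)))
      (σ ^ 2) := by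
  have hsqrt : Real.sqrt (σ ^ 2) = σ := Real.sqrt_sq hσ.le
  have hv : HasDerivAt Real.sqrt (1 / (2 * σ)) (σ ^ 2) := by
    simpa only [hsqrt] using Real.hasDerivAt_sqrt (pow_ne_zero 2 hσ.ne')
  refine ((hsqrt ▸ hasDerivAt_h_right μ hσ.ne').comp (σ ^ 2) hv).congr_deriv ?_
  rw [hsqrt, stdNormalPDF, div_pow]
  field_simp
end
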